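/- arXiv:1407.0217 — 11 statements merged into one kernel-verified Lean document; each statement's English description precedes it below -/
import Mathlib

section
/- For every N ∈ ℤ₊ and ξ ∈ ℝ^{N+1}, with α_n = a^{1/2} q^{-n-1/2} and β_n = (a+1) q^{-n}, one has ∑_{n=0}^{N} β_n ξ_n² + 2 ∑_{n=0}^{N-1} α_n ξ_n ξ_{n+1} = a ξ_0² + q^{-N} ξ_N² + ∑_{n=0}^{N-1} q^{-n} ( (a/q)^{1/2} ξ_{n+1} + ξ_n )² ≥ 0. -/
theorem stmt0 (a q : ℝ) (ha : 0 < a) (hq0 : 0 < q) (hq1 : q < 1)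
    (α β : ℕ → ℝ)
    (hα : ∀ n, α n = Real.sqrt a * q ^ (-(n : ℤ)) / Real.sqrt q)
    (hβ : ∀ n, β n = (a + 1) * q ^ (-(n : ℤ)))
    (N : ℕ) (ξ : ℕ → ℝ) :
    (∑ n ∈ Finset.range (N + 1), β n * ξ n ^ 2)
      + 2 * ∑ n ∈ Finset.range N, α n * ξ n * ξ (n + 1)
    = a * ξ 0 ^ 2 + q ^ (-(N : ℤ)) * ξ N ^ 2
      + ∑ n ∈ Finset.range N,
          q ^ (-(n : ℤ)) * (Real.sqrt (a / q) * ξ (n + 1) + ξ n) ^ 2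
    ∧ 0 ≤ (∑ n ∈ Finset.range (N + 1), β n * ξ n ^ 2)
      + 2 * ∑ n ∈ Finset.range N, α n * ξ n * ξ (n + 1) := by
  have hs2 : Real.sqrt (a / q) ^ 2 = a / q :=
    Real.sq_sqrt (by positivity)
  have hsdiv : Real.sqrt (a / q) = Real.sqrt a / Real.sqrt q :=
    Real.sqrt_div ha.le q
  have hEq : (∑ n ∈ Finset.range (N + 1), β n * ξ n ^ 2)
      + 2 * ∑ n ∈ Finset.range N, α n * ξ n * ξ (n + 1)
    = a * ξ 0 ^ 2 + q ^ (-(N : ℤ)) * ξ N ^ 2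
      + ∑ n ∈ Finset.range N,
          q ^ (-(n : ℤ)) * (Real.sqrt (a / q) * ξ (n + 1) + ξ n) ^ 2 := by
    induction N with
    | zero => simp [hβ]; ring
    | succ N ih =>
      rw [Finset.sum_range_succ (f := fun n => β n * ξ n ^ 2),
          Finset.sum_range_succ (f := fun n => α n * ξ n * ξ (n + 1)),
          Finset.sum_range_succ (f := fun n =>
            q ^ (-(n : ℤ)) * (Real.sqrt (a / q) * ξ (n + 1) + ξ n) ^ 2)]
      have hz : q ^ (-((N + 1 : ℕ) : ℤ)) = q ^ (-(N : ℤ)) * q⁻¹ := by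
        push_cast
        rw [neg_add, zpow_add₀ hq0.ne', zpow_neg_one]
      have hα' : α N = q ^ (-(N : ℤ)) * Real.sqrt (a / q) := by
        rw [hα, hsdiv]; ring
      rw [hβ, hz, hα']
      linear_combination ih - q ^ (-(N : ℤ)) * ξ (N + 1) ^ 2 * hs2
  refine ⟨hEq, hEq ▸ ?_⟩
  have h1 : (0:ℝ) ≤ a * ξ 0 ^ 2 := by positivity
  have h2 : (0:ℝ) ≤ q ^ (-(N : ℤ)) * ξ N ^ 2 := by positivity
  have h3 : (0:ℝ) ≤ ∑ n ∈ Finset.range N,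
      q ^ (-(n : ℤ)) * (Real.sqrt (a / q) * ξ (n + 1) + ξ n) ^ 2 :=
    Finset.sum_nonneg fun n _ => by positivity
  linarith
end

section
/- The monic polynomials F_n satisfy the symmetry property a^n F_n(a^{-1}, q; x) = F_n(a, q; a x) for all n ∈ ℤ₊. -/
/-- Symmetry property `aⁿ Fₙ(a⁻¹,q;x) = Fₙ(a,q;ax)` for the monic q-Lommel
polynomials defined by the recurrence
`u_{n+1} = (x-(a+1)q^{-n}) u_n - a q^{-2n+1} u_{n-1}`, `F₀ = 1`, `F₁ = x-(a+1)`. -/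
theorem stmt1 (a q : ℝ) (ha : 0 < a) (hq0 : 0 < q) (hq1 : q < 1) (x : ℂ)
    (F G : ℕ → ℂ)
    -- F n = F_n(a⁻¹, q; x)
    (hF0 : F 0 = 1) (hF1 : F 1 = x - ((a : ℂ)⁻¹ + 1))
    (hFrec : ∀ n : ℕ, F (n + 2) =
      (x - ((a : ℂ)⁻¹ + 1) * (q : ℂ) ^ (-(n + 1 : ℤ))) * F (n + 1)
        - (a : ℂ)⁻¹ * (q : ℂ) ^ (-2 * (n + 1 : ℤ) + 1) * F n)
    -- G n = F_n(a, q; a x)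
    (hG0 : G 0 = 1) (hG1 : G 1 = (a : ℂ) * x - ((a : ℂ) + 1))
    (hGrec : ∀ n : ℕ, G (n + 2) =
      ((a : ℂ) * x - ((a : ℂ) + 1) * (q : ℂ) ^ (-(n + 1 : ℤ))) * G (n + 1)
        - (a : ℂ) * (q : ℂ) ^ (-2 * (n + 1 : ℤ) + 1) * G n) :
    ∀ n : ℕ, (a : ℂ) ^ n * F n = G n := by
  have haC : (a : ℂ) ≠ 0 := by exact_mod_cast ha.ne'
  have key : ∀ n : ℕ, (a : ℂ) ^ n * F n = G n ∧
      (a : ℂ) ^ (n + 1) * F (n + 1) = G (n + 1) := by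
    intro n
    induction n with
    | zero =>
      constructor
      · simp [hF0, hG0]
      · simp [hF1, hG1]; field_simp; ring
    | succ m ih =>
      refine ⟨ih.2, ?_⟩
      rw [hFrec m, hGrec m, ← ih.1, ← ih.2]
      field_simp
      ring
  exact fun n => (key n).1
end

section
/- For a = 1 and all n ∈ ℤ₊, F_n(1,q;0) = (-1)^n q^{-n(n-1)/2} (n+1). -/
/-!
Rewriting `q ^ (-k)` as `(q⁻¹) ^ k` turns the recurrence at `x = 0` into one with natural exponents.
The exponent `n(n-1)/2` is `n.choose 2`, which grows by `n` from `n` to `n + 1`, so after factoring out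
`(-1)ⁿ (q⁻¹)^(n.choose 2 + 2n + 1)` the recurrence for the claimed closed form reduces to
`n + 3 = 2 (n + 2) - (n + 1)`; two-step induction then identifies `F` with it.
-/

section

variable {K : Type*} [Field K]

/-- The closed form of `Fₙ(1,q;0)`, written with `q⁻¹` to keep the exponent natural. -/
def atZeroClosedForm (q : K) (n : ℕ) : K :=
  (-1) ^ n * q⁻¹ ^ n.choose 2 * (n + 1)

lemma atZeroClosedForm_add_two (q : K) (n : ℕ) :
    atZeroClosedForm q (n + 2) =
      -2 * q⁻¹ ^ (n + 1) * atZeroClosedForm q (n + 1)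
        - q⁻¹ ^ (2 * n + 1) * atZeroClosedForm q n := by
  have choose_succ : (n + 1).choose 2 = n.choose 2 + n := by
    rw [Nat.choose_succ_succ, Nat.choose_one_right, add_comm]
  have choose_succ_succ : (n + 2).choose 2 = n.choose 2 + (2 * n + 1) := by
    rw [Nat.choose_succ_succ, Nat.choose_one_right, choose_succ]
    ring
  simp only [atZeroClosedForm, choose_succ, choose_succ_succ]
  push_cast
  ring

lemma zpow_neg_natCast_eq_inv_pow (q : K) (k : ℕ) : q ^ (-(k : ℤ)) = q⁻¹ ^ k := by
  rw [zpow_neg, zpow_natCast, inv_pow]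

end

theorem stmt3_general (q : ℝ)
    (F : ℕ → ℝ)
    (hF0 : F 0 = 1) (hF1 : F 1 = 0 - 2)
    (hFrec : ∀ n : ℕ, F (n + 2) =
      (0 - 2 * q ^ (-(n + 1 : ℤ))) * F (n + 1)
        - q ^ (-2 * (n + 1 : ℤ) + 1) * F n) :
    ∀ n : ℕ, F n = (-1) ^ n * q ^ (-(n * (n - 1) / 2 : ℕ) : ℤ) * (n + 1) := by
  have hrec (n : ℕ) :
      F (n + 2) = -2 * q⁻¹ ^ (n + 1) * F (n + 1) - q⁻¹ ^ (2 * n + 1) * F n := by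
    have hexp : -2 * (n + 1 : ℤ) + 1 = -((2 * n + 1 : ℕ) : ℤ) := by push_cast; ring
    rw [hFrec n, hexp, ← zpow_neg_natCast_eq_inv_pow, ← zpow_neg_natCast_eq_inv_pow]
    push_cast
    ring
  have hF : ∀ n, F n = atZeroClosedForm q n := by
    intro n
    induction n using Nat.twoStepInduction with
    | zero => simp [hF0, atZeroClosedForm]
    | one => norm_num [hF1, atZeroClosedForm]
    | more n ih0 ih1 => rw [hrec, ih0, ih1, atZeroClosedForm_add_two]
  intro n
  rw [hF, atZeroClosedForm, zpow_neg_natCast_eq_inv_pow, Nat.choose_two_right]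

/-- `Fₙ(1,q;0) = (-1)ⁿ q^{-n(n-1)/2} (n+1)`. -/
theorem stmt3 (q : ℝ) (hq0 : 0 < q) (hq1 : q < 1)
    (F : ℕ → ℝ)
    (hF0 : F 0 = 1) (hF1 : F 1 = 0 - 2)
    (hFrec : ∀ n : ℕ, F (n + 2) =
      (0 - 2 * q ^ (-(n + 1 : ℤ))) * F (n + 1)
        - q ^ (-2 * (n + 1 : ℤ) + 1) * F n) :
    ∀ n : ℕ, F n = (-1) ^ n * q ^ (-(n * (n - 1) / 2 : ℕ) : ℤ) * (n + 1) :=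
  stmt3_general q F hF0 hF1 hFrec
end

section
/- The function V(t) = ∑_{k=0}^∞ q^{k(k-1)/2} (-x t)^k / ((t;q)_{k+1} (a t;q)_{k+1}), defined and analytic for |t| < min(1, a^{-1}), satisfies the q-difference equation (1 - t)(1 - a t) V(t) = 1 - x t V(q t). -/
/-!
Write `c_k(t)` for the `k`-th term of `V(t)`. Peeling the factors `1 - t` and `1 - a t` off the
two Pochhammer symbols gives the termwise identity `(1 - t)(1 - a t) c_{k+1}(t) = -x t c_k(q t)`,
while `(1 - t)(1 - a t) c_0(t) = 1`; summing over `k` yields the q-difference equation.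
The series converges by the ratio test: `c_{k+1}(t) / c_k(t)` is `qᵏ` times a factor tending
to `-x t`.
-/

open Finset

/-- Finite q-Pochhammer symbol `(z;q)_k = ∏_{j<k} (1 - z qʲ)`. -/
noncomputable def qPoch (z q : ℂ) (k : ℕ) : ℂ := ∏ j ∈ range k, (1 - z * q ^ j)

open Filter Topology

theorem one_sub_ne_zero_of_norm_lt_one {R : Type*} [NormedRing R] [NormOneClass R] {z : R}
    (hz : ‖z‖ < 1) : 1 - z ≠ 0 :=
  sub_ne_zero.mpr fun h => by simp [← h] at hz

theorem qPoch_succ (z q : ℂ) (k : ℕ) : qPoch z q (k + 1) = qPoch z q k * (1 - z * q ^ k) :=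
  prod_range_succ _ _

theorem qPoch_succ' (z q : ℂ) (k : ℕ) : qPoch z q (k + 1) = (1 - z) * qPoch (q * z) q k := by
  simp only [qPoch, prod_range_succ', pow_zero, mul_one, pow_succ]
  rw [mul_comm]
  congr 1
  exact prod_congr rfl fun j _ => by ring

noncomputable def qSeriesTerm (q x b t : ℂ) (k : ℕ) : ℂ :=
  q ^ (k * (k - 1) / 2) * (-x * t) ^ k / (qPoch t q (k + 1) * qPoch (b * t) q (k + 1))

namespace qSeriesTerm

variable (x b t : ℂ) {q : ℂ}

theorem succ (k : ℕ) :
    qSeriesTerm q x b t (k + 1) =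
      q ^ k * (-x * t) / ((1 - t * q ^ (k + 1)) * (1 - b * t * q ^ (k + 1))) *
        qSeriesTerm q x b t k := by
  rw [qSeriesTerm, qSeriesTerm, qPoch_succ t, qPoch_succ (b * t), Nat.triangle_succ,
    div_mul_div_comm]
  congr 1 <;> ring

theorem tendsto_ratio (hq : ‖q‖ < 1) :
    Tendsto (fun k : ℕ => q ^ k * (-x * t) / ((1 - t * q ^ (k + 1)) * (1 - b * t * q ^ (k + 1))))
      atTop (𝓝 0) := by
  have hpow : Tendsto (fun k : ℕ => q ^ k) atTop (𝓝 0) :=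
    tendsto_pow_atTop_nhds_zero_of_norm_lt_one hq
  have hpow' : Tendsto (fun k : ℕ => q ^ (k + 1)) atTop (𝓝 0) :=
    hpow.comp (tendsto_add_atTop_nat 1)
  convert (hpow.mul_const (-x * t)).div
    (((hpow'.const_mul t).const_sub 1).mul ((hpow'.const_mul (b * t)).const_sub 1)) (by simp)
    using 2
  all_goals simp

theorem summable (hq : ‖q‖ < 1) : Summable (qSeriesTerm q x b t) := by
  refine summable_of_ratio_norm_eventually_le (r := 1 / 2) (by norm_num) ?_
  have hsmall := (tendsto_ratio x b t hq).norm.eventually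
    (ge_mem_nhds (by norm_num : ‖(0 : ℂ)‖ < 1 / 2))
  filter_upwards [hsmall] with k hk
  rw [succ, norm_mul]
  exact mul_le_mul_of_nonneg_right hk (norm_nonneg _)

theorem zero_eq : qSeriesTerm q x b t 0 = 1 / ((1 - t) * (1 - b * t)) := by
  simp [qSeriesTerm, qPoch]

theorem q_difference_succ (ht : 1 - t ≠ 0) (hbt : 1 - b * t ≠ 0) (k : ℕ) :
    (1 - t) * (1 - b * t) * qSeriesTerm q x b t (k + 1) =
      -x * t * qSeriesTerm q x b (q * t) k := by
  rw [qSeriesTerm, qSeriesTerm, qPoch_succ' t, qPoch_succ' (b * t), Nat.triangle_succ,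
    show b * (q * t) = q * (b * t) by ring, mul_mul_mul_comm (1 - t), ← mul_div_assoc,
    mul_div_mul_left _ _ (mul_ne_zero ht hbt)]
  ring

theorem tsum_q_difference (hq : ‖q‖ < 1) (ht : 1 - t ≠ 0) (hbt : 1 - b * t ≠ 0) :
    (1 - t) * (1 - b * t) * ∑' k, qSeriesTerm q x b t k =
      1 - x * t * ∑' k, qSeriesTerm q x b (q * t) k := by
  rw [← tsum_mul_left, ((summable x b t hq).mul_left _).tsum_eq_zero_add, zero_eq,
    mul_one_div_cancel (mul_ne_zero ht hbt)]
  simp only [q_difference_succ x b t ht hbt, tsum_mul_left]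
  ring

end qSeriesTerm

theorem stmt4_general (a q : ℝ) (hq0 : 0 < q) (hq1 : q < 1) (x : ℂ)
    (V : ℂ → ℂ)
    (hV : ∀ t : ℂ, V t = ∑' k : ℕ,
      (q : ℂ) ^ (k * (k - 1) / 2 : ℕ) * (-x * t) ^ k /
        (qPoch t q (k + 1) * qPoch ((a : ℂ) * t) q (k + 1)))
    (t : ℂ) (ht : ‖t‖ < min 1 a⁻¹) :
    Summable (fun k : ℕ =>
      (q : ℂ) ^ (k * (k - 1) / 2 : ℕ) * (-x * t) ^ k /
        (qPoch t q (k + 1) * qPoch ((a : ℂ) * t) q (k + 1)))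
    ∧ (1 - t) * (1 - (a : ℂ) * t) * V t = 1 - x * t * V ((q : ℂ) * t) := by
  have hq : ‖(q : ℂ)‖ < 1 := by
    rw [Complex.norm_real, Real.norm_eq_abs, abs_lt]; constructor <;> linarith
  obtain ⟨ht1, hta⟩ := lt_min_iff.mp ht
  have ha : 0 < a := inv_pos.mp ((norm_nonneg t).trans_lt hta)
  have hat : ‖(a : ℂ) * t‖ < 1 := by
    rw [norm_mul, Complex.norm_real, Real.norm_eq_abs, abs_of_pos ha]
    simpa [ha.ne'] using mul_lt_mul_of_pos_left hta ha
  have hV' : ∀ s, V s = ∑' k, qSeriesTerm q x a s k := hV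
  refine ⟨qSeriesTerm.summable x a t hq, ?_⟩
  rw [hV', hV']
  exact qSeriesTerm.tsum_q_difference x a t hq (one_sub_ne_zero_of_norm_lt_one ht1)
    (one_sub_ne_zero_of_norm_lt_one hat)

/-- `V(t) = ∑ₖ q^{k(k-1)/2}(-xt)ᵏ/((t;q)_{k+1}(at;q)_{k+1})` converges for
`|t| < min(1, a⁻¹)` and satisfies `(1-t)(1-at)V(t) = 1 - x t V(qt)`. -/
theorem stmt4 (a q : ℝ) (ha : 0 < a) (hq0 : 0 < q) (hq1 : q < 1) (x : ℂ)
    (V : ℂ → ℂ)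
    (hV : ∀ t : ℂ, V t = ∑' k : ℕ,
      (q : ℂ) ^ (k * (k - 1) / 2 : ℕ) * (-x * t) ^ k /
        (qPoch t q (k + 1) * qPoch ((a : ℂ) * t) q (k + 1)))
    (t : ℂ) (ht : ‖t‖ < min 1 a⁻¹) :
    Summable (fun k : ℕ =>
      (q : ℂ) ^ (k * (k - 1) / 2 : ℕ) * (-x * t) ^ k /
        (qPoch t q (k + 1) * qPoch ((a : ℂ) * t) q (k + 1)))
    ∧ (1 - t) * (1 - (a : ℂ) * t) * V t = 1 - x * t * V ((q : ℂ) * t) :=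
  stmt4_general a q hq0 hq1 x V hV t ht
end

section
/- If q < a < q^{-1}, then ∑_{n=0}^∞ ( P_n(a,q;0)² + Q_n(a,q;0)² ) < ∞, where P_n(a,q;0) = (-1)^n (q/a)^{n/2} (1-a^{n+1})/(1-a) and Q_n(a,q;0) = (-1)^{n+1} (q/a)^{n/2} (1-a^n)/(1-a) for a ≠ 1, and P_n(1,q;0) = (-1)^n q^{n/2}(n+1), Q_n(1,q;0) = (-1)^{n+1} q^{n/2} n. Conversely, if a ≤ q or a ≥ q^{-1}, the series diverges. -/
/-!
Write `[m]ₐ = ∑_{k<m} aᵏ` and `r = q / a`. Then `Pₙ² + Qₙ² = rⁿ ([n+1]ₐ² + [n]ₐ²)` for every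
`a > 0`, the case `a = 1` included. Since `[n+1]ₐ - a [n]ₐ = 1` and `[n+1]ₐ - [n]ₐ = aⁿ`, the
bracket is at least a constant times `1 + a²ⁿ`, and since `[n+1]ₐ ≤ (n+1)(1 + aⁿ)` it is at most
`4 (n+1)² (1 + a²ⁿ)`. The series is therefore squeezed between multiples of `∑ (rⁿ + (r a²)ⁿ)` and
`∑ (n+1)² (rⁿ + (r a²)ⁿ)`, both of which converge exactly when `r = q / a < 1` and `r a² = q a < 1`.
-/

open Real Finset

lemma rpow_div_two_sq {x : ℝ} (hx : 0 ≤ x) (n : ℕ) : (x ^ ((n : ℝ) / 2)) ^ 2 = x ^ n := by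
  rw [← rpow_natCast, ← rpow_mul hx, ← rpow_natCast]
  norm_num

lemma neg_one_pow_mul_rpow_div_two_mul_sq {x : ℝ} (hx : 0 ≤ x) (m n : ℕ) (y : ℝ) :
    ((-1) ^ m * x ^ ((n : ℝ) / 2) * y) ^ 2 = x ^ n * y ^ 2 := by
  rw [mul_pow, mul_pow, ← pow_mul, pow_mul', neg_one_sq, one_pow, one_mul, rpow_div_two_sq hx]

lemma ite_eq_geom_sum (a : ℝ) (m : ℕ) :
    (if a = 1 then (m : ℝ) else (1 - a ^ m) / (1 - a)) = ∑ k ∈ range m, a ^ k := by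
  split_ifs with ha
  · simp [ha]
  · rw [range_eq_Ico, geom_sum_Ico' ha (Nat.zero_le m), pow_zero]

lemma one_add_sq_pow_le_geom_sum_sq_add_sq (a : ℝ) (n : ℕ) :
    1 + (a ^ n) ^ 2 ≤
      (3 + a ^ 2) * ((∑ k ∈ range (n + 1), a ^ k) ^ 2 + (∑ k ∈ range n, a ^ k) ^ 2) := by
  set x := ∑ k ∈ range (n + 1), a ^ k
  set y := ∑ k ∈ range n, a ^ k
  -- Cauchy–Schwarz applied to `1 = x - a y` and `aⁿ = x - y`
  have hx : x = a * y + 1 := geom_sum_succ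
  have hx' : x = a ^ n + y := geom_sum_succ'
  calc 1 + (a ^ n) ^ 2 = (x - a * y) ^ 2 + (x - y) ^ 2 := by
        rw [sub_eq_of_eq_add' hx, sub_eq_of_eq_add hx', one_pow]
    _ ≤ (3 + a ^ 2) * (x ^ 2 + y ^ 2) := by nlinarith [sq_nonneg (a * x + y), sq_nonneg (x + y)]

lemma geom_sum_range_succ_le {a : ℝ} (ha : 0 ≤ a) (n : ℕ) :
    ∑ k ∈ range (n + 1), a ^ k ≤ (n + 1) * (1 + a ^ n) := by
  have hterm : ∀ k ∈ range (n + 1), a ^ k ≤ 1 + a ^ n := by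
    intro k hk
    have hkn : k ≤ n := Nat.lt_succ_iff.mp (mem_range.mp hk)
    rcases le_total a 1 with h | h
    · linarith [pow_le_one₀ ha h (n := k), pow_nonneg ha n]
    · linarith [pow_le_pow_right₀ h hkn]
  refine (sum_le_card_nsmul _ _ _ hterm).trans_eq ?_
  rw [card_range, nsmul_eq_mul, Nat.cast_succ]

lemma geom_sum_sq_add_sq_le {a : ℝ} (ha : 0 ≤ a) (n : ℕ) :
    (∑ k ∈ range (n + 1), a ^ k) ^ 2 + (∑ k ∈ range n, a ^ k) ^ 2 ≤
      4 * ((n : ℝ) + 1) ^ 2 * (1 + (a ^ n) ^ 2) := by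
  set x := ∑ k ∈ range (n + 1), a ^ k
  set y := ∑ k ∈ range n, a ^ k
  have hy : 0 ≤ y := sum_nonneg fun k _ => pow_nonneg ha k
  have hyx : y ≤ x := by linarith [(geom_sum_succ' : x = a ^ n + y), pow_nonneg ha n]
  have hx : x ≤ (n + 1) * (1 + a ^ n) := geom_sum_range_succ_le ha n
  have han : 0 ≤ a ^ n := pow_nonneg ha n
  calc x ^ 2 + y ^ 2 ≤ 2 * ((n + 1) * (1 + a ^ n)) ^ 2 := by nlinarith
    _ ≤ 4 * ((n : ℝ) + 1) ^ 2 * (1 + (a ^ n) ^ 2) := by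
      rw [mul_pow]
      nlinarith [sq_nonneg (1 - a ^ n), sq_nonneg ((n : ℝ) + 1)]

lemma summable_geometric_add_geometric_iff {r s : ℝ} (hr : 0 ≤ r) (hs : 0 ≤ s) :
    Summable (fun n : ℕ => r ^ n + s ^ n) ↔ r < 1 ∧ s < 1 := by
  constructor
  · intro h
    have hr' : Summable (fun n : ℕ => r ^ n) :=
      h.of_nonneg_of_le (fun n => pow_nonneg hr n) fun n => le_add_of_nonneg_right (pow_nonneg hs n)
    have hs' : Summable (fun n : ℕ => s ^ n) :=
      h.of_nonneg_of_le (fun n => pow_nonneg hs n) fun n => le_add_of_nonneg_left (pow_nonneg hr n)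
    rw [summable_geometric_iff_norm_lt_one, norm_of_nonneg hr] at hr'
    rw [summable_geometric_iff_norm_lt_one, norm_of_nonneg hs] at hs'
    exact ⟨hr', hs'⟩
  · rintro ⟨hr1, hs1⟩
    exact (summable_geometric_of_lt_one hr hr1).add (summable_geometric_of_lt_one hs hs1)

lemma summable_succ_sq_mul_geometric {r : ℝ} (hr : 0 ≤ r) (hr1 : r < 1) :
    Summable (fun n : ℕ => ((n : ℝ) + 1) ^ 2 * r ^ n) := by
  have hnorm : ‖r‖ < 1 := by rwa [norm_of_nonneg hr]
  refine (((summable_pow_mul_geometric_of_norm_lt_one 2 hnorm).add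
    ((summable_pow_mul_geometric_of_norm_lt_one 1 hnorm).mul_left 2)).add
    (summable_geometric_of_lt_one hr hr1)).congr fun n => ?_
  ring

lemma summable_pow_mul_geom_sum_sq_add_sq_iff {a r : ℝ} (ha : 0 ≤ a) (hr : 0 ≤ r) :
    Summable (fun n : ℕ =>
        r ^ n * ((∑ k ∈ range (n + 1), a ^ k) ^ 2 + (∑ k ∈ range n, a ^ k) ^ 2)) ↔
      r < 1 ∧ r * a ^ 2 < 1 := by
  have hs : 0 ≤ r * a ^ 2 := by positivity
  have hgeom : ∀ n : ℕ, r ^ n * (1 + (a ^ n) ^ 2) = r ^ n + (r * a ^ 2) ^ n := by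
    intro n
    rw [mul_add, mul_one, pow_right_comm, mul_pow]
  rw [← summable_geometric_add_geometric_iff hr hs]
  constructor
  · intro h
    refine (h.mul_left (3 + a ^ 2)).of_nonneg_of_le (fun n => by positivity) fun n => ?_
    rw [← hgeom, mul_left_comm]
    exact mul_le_mul_of_nonneg_left
      (one_add_sq_pow_le_geom_sum_sq_add_sq a n) (pow_nonneg hr n)
  · intro h
    obtain ⟨hr1, hs1⟩ := (summable_geometric_add_geometric_iff hr hs).mp h
    refine (((summable_succ_sq_mul_geometric hr hr1).add
      (summable_succ_sq_mul_geometric hs hs1)).mul_left 4).of_nonneg_of_le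
      (fun n => by positivity) fun n => ?_
    calc _ ≤ r ^ n * (4 * ((n : ℝ) + 1) ^ 2 * (1 + (a ^ n) ^ 2)) :=
          mul_le_mul_of_nonneg_left (geom_sum_sq_add_sq_le ha n) (pow_nonneg hr n)
      _ = 4 * (((n : ℝ) + 1) ^ 2 * r ^ n + ((n : ℝ) + 1) ^ 2 * (r * a ^ 2) ^ n) := by
          linear_combination (4 * ((n : ℝ) + 1) ^ 2) * hgeom n

theorem stmt8_general (a q : ℝ) (ha : 0 < a) (hq0 : 0 < q)
    (P Q : ℕ → ℝ)
    (hP : ∀ n : ℕ, P n = if a = 1 then (-1) ^ n * q ^ ((n : ℝ) / 2) * (n + 1)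
      else (-1) ^ n * (q / a) ^ ((n : ℝ) / 2) * (1 - a ^ (n + 1)) / (1 - a))
    (hQ : ∀ n : ℕ, Q n = if a = 1 then (-1) ^ (n + 1) * q ^ ((n : ℝ) / 2) * n
      else (-1) ^ (n + 1) * (q / a) ^ ((n : ℝ) / 2) * (1 - a ^ n) / (1 - a)) :
    Summable (fun n : ℕ => P n ^ 2 + Q n ^ 2) ↔ (q < a ∧ a < q⁻¹) := by
  have hr : 0 ≤ q / a := by positivity
  have hP' : ∀ n : ℕ, P n = (-1) ^ n * (q / a) ^ ((n : ℝ) / 2) * ∑ k ∈ range (n + 1), a ^ k := by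
    intro n
    rw [hP, ← ite_eq_geom_sum]
    split_ifs with h <;> simp [h, mul_div_assoc]
  have hQ' : ∀ n : ℕ, Q n = (-1) ^ (n + 1) * (q / a) ^ ((n : ℝ) / 2) * ∑ k ∈ range n, a ^ k := by
    intro n
    rw [hQ, ← ite_eq_geom_sum]
    split_ifs with h <;> simp [h, mul_div_assoc]
  have hterm : (fun n : ℕ => P n ^ 2 + Q n ^ 2) = fun n : ℕ =>
      (q / a) ^ n * ((∑ k ∈ range (n + 1), a ^ k) ^ 2 + (∑ k ∈ range n, a ^ k) ^ 2) := by
    funext n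
    rw [hP', hQ', neg_one_pow_mul_rpow_div_two_mul_sq hr, neg_one_pow_mul_rpow_div_two_mul_sq hr,
      mul_add]
  have hcond : (q < a ∧ a < q⁻¹) ↔ (q / a < 1 ∧ q / a * a ^ 2 < 1) := by
    rw [div_lt_one ha, div_mul_eq_mul_div, sq, ← mul_assoc, mul_div_cancel_right₀ _ ha.ne',
      ← one_div, lt_div_iff₀ hq0, mul_comm a q]
  rw [hterm, summable_pow_mul_geom_sum_sq_add_sq_iff ha.le hr, hcond]

/-- Convergence criterion for indeterminacy: `∑ (Pₙ(0)² + Qₙ(0)²) < ∞` iff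
`q < a < q⁻¹`. -/
theorem stmt8 (a q : ℝ) (ha : 0 < a) (hq0 : 0 < q) (hq1 : q < 1)
    (P Q : ℕ → ℝ)
    (hP : ∀ n : ℕ, P n = if a = 1 then (-1) ^ n * q ^ ((n : ℝ) / 2) * (n + 1)
      else (-1) ^ n * (q / a) ^ ((n : ℝ) / 2) * (1 - a ^ (n + 1)) / (1 - a))
    (hQ : ∀ n : ℕ, Q n = if a = 1 then (-1) ^ (n + 1) * q ^ ((n : ℝ) / 2) * n
      else (-1) ^ (n + 1) * (q / a) ^ ((n : ℝ) / 2) * (1 - a ^ n) / (1 - a)) :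
    Summable (fun n : ℕ => P n ^ 2 + Q n ^ 2) ↔ (q < a ∧ a < q⁻¹) :=
  stmt8_general a q ha hq0 P Q hP hQ
end

section
/- The entire function G(z) = ∑_{k=0}^∞ ω_k(a,p) (p z)^k / (p;p)_k, where ω_k(a,p) = ∑_{j=0}^k [k choose j]_p p^{-j(k-j)} a^j, satisfies the second-order q-difference equation G(z) − (1 − (a+1) z) G(p^{-1} z) + a p^{-1} z² G(p^{-2} z) = 0. -/
open Finset

/-- `(p;p)_k = ∏_{i=1}^{k} (1 - pⁱ)`. -/
noncomputable def pPoch (p : ℝ) (k : ℕ) : ℝ := ∏ i ∈ range k, (1 - p ^ (i + 1))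

/-- p-binomial (Gaussian) coefficient `[k choose j]_p`. -/
noncomputable def pBinom (p : ℝ) (k j : ℕ) : ℝ :=
  pPoch p k / (pPoch p j * pPoch p (k - j))

/-!
With `q = p⁻¹`, the identity `[k choose j]_p = p^{j(k-j)} [k choose j]_q` shows that
`ω_k(a, p)` is the Rogers–Szegő polynomial `H_k(a; q) = ∑_j [k choose j]_q a^j`. The two
`q`-Pascal rules give the three-term recurrence
`H_{k+2} = (1 + a) H_{k+1} - a (1 - q^{k+1}) H_k`, and comparing the coefficients of `z^{k+2}`
on both sides of the `q`-difference equation reduces it to exactly this recurrence. The series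
converges on all of `ℂ` because `|H_k| ≤ (1 + |a|)^k` while `|(p;p)_k|` grows like
`p^{k(k+1)/2}`.
-/

section QBinomial

variable {q : ℝ}

lemma pPoch_zero : pPoch q 0 = 1 := prod_range_zero _

lemma pPoch_succ (n : ℕ) : pPoch q (n + 1) = pPoch q n * (1 - q ^ (n + 1)) :=
  prod_range_succ _ _

variable (hq : ∀ n : ℕ, q ^ (n + 1) ≠ 1)
include hq

lemma pPoch_ne_zero (n : ℕ) : pPoch q n ≠ 0 :=
  prod_ne_zero_iff.mpr fun i _ => sub_ne_zero.mpr (hq i).symm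

lemma pBinom_zero_right (n : ℕ) : pBinom q n 0 = 1 := by
  simp [pBinom, pPoch_zero, pPoch_ne_zero hq]

lemma pBinom_self (n : ℕ) : pBinom q n n = 1 := by
  simp [pBinom, pPoch_zero, pPoch_ne_zero hq]

lemma pBinom_succ_succ {n j : ℕ} (hj : j < n) :
    pBinom q (n + 1) (j + 1) = pBinom q n j + q ^ (j + 1) * pBinom q n (j + 1) := by
  obtain ⟨d, rfl⟩ : ∃ d, n = j + d + 1 := ⟨n - j - 1, by omega⟩
  have hsub : j + d + 1 - j = d + 1 := by omega
  simp only [pBinom, hsub, Nat.add_sub_add_right, Nat.add_sub_cancel_left, pPoch_succ]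
  have := pPoch_ne_zero hq j; have := pPoch_ne_zero hq d
  have := sub_ne_zero.mpr (hq j).symm; have := sub_ne_zero.mpr (hq d).symm
  field_simp
  ring

lemma pBinom_succ_succ' {n j : ℕ} (hj : j < n) :
    pBinom q (n + 1) (j + 1) = q ^ (n - j) * pBinom q n j + pBinom q n (j + 1) := by
  obtain ⟨d, rfl⟩ : ∃ d, n = j + d + 1 := ⟨n - j - 1, by omega⟩
  have hsub : j + d + 1 - j = d + 1 := by omega
  simp only [pBinom, hsub, Nat.add_sub_add_right, Nat.add_sub_cancel_left, pPoch_succ]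
  have := pPoch_ne_zero hq j; have := pPoch_ne_zero hq d
  have := sub_ne_zero.mpr (hq j).symm; have := sub_ne_zero.mpr (hq d).symm
  field_simp
  ring

end QBinomial

noncomputable def rogersSzego (q x : ℝ) (n : ℕ) : ℝ :=
  ∑ j ∈ range (n + 1), pBinom q n j * x ^ j

section RogersSzego

variable {q : ℝ} (hq : ∀ n : ℕ, q ^ (n + 1) ≠ 1) (x : ℝ)
include hq

lemma rogersSzego_eq_sum_add_pow (n : ℕ) :
    rogersSzego q x n = ∑ j ∈ range n, pBinom q n j * x ^ j + x ^ n := by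
  rw [rogersSzego, sum_range_succ, pBinom_self hq, one_mul]

lemma rogersSzego_eq_one_add_sum (n : ℕ) :
    rogersSzego q x n = 1 + ∑ j ∈ range n, pBinom q n (j + 1) * x ^ (j + 1) := by
  rw [rogersSzego, sum_range_succ', pBinom_zero_right hq, pow_zero, one_mul, add_comm]

lemma rogersSzego_succ_eq_one_add_sum_add_pow (n : ℕ) : rogersSzego q x (n + 1) =
    1 + ∑ j ∈ range n, pBinom q (n + 1) (j + 1) * x ^ (j + 1) + x ^ (n + 1) := by
  rw [rogersSzego_eq_one_add_sum hq, sum_range_succ, pBinom_self hq, one_mul, add_assoc]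

lemma rogersSzego_zero : rogersSzego q x 0 = 1 := by
  simp [rogersSzego, pBinom_self hq]

lemma rogersSzego_one : rogersSzego q x 1 = 1 + x := by
  simpa using rogersSzego_succ_eq_one_add_sum_add_pow hq x 0

lemma rogersSzego_succ (n : ℕ) :
    rogersSzego q x (n + 1) = x * rogersSzego q x n + rogersSzego q (q * x) n := by
  have hpascal : ∑ j ∈ range n, pBinom q (n + 1) (j + 1) * x ^ (j + 1) =
      x * ∑ j ∈ range n, pBinom q n j * x ^ j +
        ∑ j ∈ range n, pBinom q n (j + 1) * (q * x) ^ (j + 1) := by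
    rw [mul_sum, ← sum_add_distrib]
    refine sum_congr rfl fun j hj => ?_
    rw [pBinom_succ_succ hq (mem_range.mp hj)]
    ring
  rw [rogersSzego_succ_eq_one_add_sum_add_pow hq, hpascal, rogersSzego_eq_sum_add_pow hq x n,
    rogersSzego_eq_one_add_sum hq (q * x) n]
  ring

lemma rogersSzego_mul_succ (n : ℕ) : rogersSzego q (q * x) (n + 1) =
    rogersSzego q (q * x) n + q ^ (n + 1) * x * rogersSzego q x n := by
  have hpascal : ∑ j ∈ range n, pBinom q (n + 1) (j + 1) * (q * x) ^ (j + 1) =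
      ∑ j ∈ range n, pBinom q n (j + 1) * (q * x) ^ (j + 1) +
        q ^ (n + 1) * x * ∑ j ∈ range n, pBinom q n j * x ^ j := by
    rw [mul_sum, ← sum_add_distrib]
    refine sum_congr rfl fun j hj => ?_
    have hjn := mem_range.mp hj
    rw [pBinom_succ_succ' hq hjn, show n + 1 = n - j + (j + 1) by omega, pow_add]
    ring
  rw [rogersSzego_succ_eq_one_add_sum_add_pow hq, hpascal, rogersSzego_eq_sum_add_pow hq x n,
    rogersSzego_eq_one_add_sum hq (q * x) n]
  ring

lemma rogersSzego_add_two (n : ℕ) : rogersSzego q x (n + 2) =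
    (1 + x) * rogersSzego q x (n + 1) - x * (1 - q ^ (n + 1)) * rogersSzego q x n := by
  linear_combination rogersSzego_succ hq x (n + 1) + rogersSzego_mul_succ hq x n
    - rogersSzego_succ hq x n

end RogersSzego

lemma pow_succ_ne_one_of_lt_one {q : ℝ} (hq₀ : 0 ≤ q) (hq₁ : q < 1) (n : ℕ) :
    q ^ (n + 1) ≠ 1 :=
  (pow_lt_one₀ hq₀ hq₁ n.succ_ne_zero).ne

lemma pow_succ_ne_one_of_one_lt {p : ℝ} (hp : 1 < p) (n : ℕ) : p ^ (n + 1) ≠ 1 :=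
  (one_lt_pow₀ hp n.succ_ne_zero).ne'

lemma pBinom_nonneg_and_le_choose {q : ℝ} (hq₀ : 0 ≤ q) (hq₁ : q < 1) :
    ∀ {n j : ℕ}, j ≤ n → 0 ≤ pBinom q n j ∧ pBinom q n j ≤ n.choose j := by
  have hq := pow_succ_ne_one_of_lt_one hq₀ hq₁
  intro n
  induction n with
  | zero => intro j hj; simp [Nat.le_zero.mp hj, pBinom_self hq]
  | succ n ih =>
    rintro (_ | j) hj
    · simp [pBinom_zero_right hq]
    rcases (Nat.lt_or_eq_of_le (Nat.le_of_succ_le_succ hj)) with hjn | rfl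
    · obtain ⟨h₀, h₁⟩ := ih hjn.le
      obtain ⟨h₀', h₁'⟩ := ih hjn
      have hqj : q ^ (j + 1) ≤ 1 := pow_le_one₀ hq₀ hq₁.le
      rw [pBinom_succ_succ hq hjn, Nat.choose_succ_succ', Nat.cast_add]
      constructor
      · positivity
      · nlinarith [pow_nonneg hq₀ (j + 1)]
    · simp [pBinom_self hq]

lemma abs_rogersSzego_le {q : ℝ} (hq₀ : 0 ≤ q) (hq₁ : q < 1) (x : ℝ) (n : ℕ) :
    |rogersSzego q x n| ≤ (1 + |x|) ^ n := by
  rw [rogersSzego, add_comm 1 |x|, add_pow]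
  refine (abs_sum_le_sum_abs _ _).trans (sum_le_sum fun j hj => ?_)
  obtain ⟨h₀, h₁⟩ :=
    pBinom_nonneg_and_le_choose hq₀ hq₁ (Nat.lt_succ_iff.mp (mem_range.mp hj))
  rw [abs_mul, abs_pow, abs_of_nonneg h₀, one_pow, mul_one, mul_comm]
  gcongr

lemma choose_succ_two_add (j d : ℕ) :
    (j + d + 1).choose 2 = (j + 1).choose 2 + (d + 1).choose 2 + j * d := by
  have : ((j + d + 1).choose 2 : ℚ) = (j + 1).choose 2 + (d + 1).choose 2 + j * d := by
    push_cast [Nat.cast_choose_two]; ring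
  exact_mod_cast this

lemma pPoch_eq_pPoch_inv {p : ℝ} (hp : p ≠ 0) (n : ℕ) :
    pPoch p n = (-1) ^ n * p ^ (n + 1).choose 2 * pPoch p⁻¹ n := by
  induction n with
  | zero => simp [pPoch_zero]
  | succ n ih =>
    rw [pPoch_succ, pPoch_succ, ih, Nat.choose_succ_succ' (n + 1), Nat.choose_one_right, inv_pow]
    field_simp
    ring

lemma pBinom_eq_pow_mul_pBinom_inv {p : ℝ} (hp : p ≠ 0) {n j : ℕ} (hj : j ≤ n) :
    pBinom p n j = p ^ (j * (n - j)) * pBinom p⁻¹ n j := by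
  obtain ⟨d, rfl⟩ := Nat.exists_eq_add_of_le hj
  rw [pBinom, pBinom, Nat.add_sub_cancel_left, pPoch_eq_pPoch_inv hp, pPoch_eq_pPoch_inv hp,
    pPoch_eq_pPoch_inv hp, choose_succ_two_add, pow_add, pow_add, pow_add]
  field_simp

lemma pBinom_mul_zpow_eq_pBinom_inv {p : ℝ} (hp : p ≠ 0) {n j : ℕ} (hj : j ≤ n) :
    pBinom p n j * p ^ (-(j * (n - j) : ℤ)) = pBinom p⁻¹ n j := by
  rw [pBinom_eq_pow_mul_pBinom_inv hp hj, ← Nat.cast_sub hj, ← Nat.cast_mul, zpow_neg,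
    zpow_natCast]
  field_simp

lemma abs_pPoch_succ {p : ℝ} (hp : 1 < p) (n : ℕ) :
    |pPoch p (n + 1)| = |pPoch p n| * (p ^ (n + 1) - 1) := by
  rw [pPoch_succ, abs_mul, abs_sub_comm,
    abs_of_pos (sub_pos.mpr (one_lt_pow₀ hp n.succ_ne_zero))]

lemma summable_pow_div_abs_pPoch {p : ℝ} (hp : 1 < p) (x : ℝ) :
    Summable fun n => x ^ n / |pPoch p n| := by
  have hpow : Filter.Tendsto (fun n : ℕ => p ^ (n + 1)) Filter.atTop Filter.atTop :=
    (tendsto_pow_atTop_atTop_of_one_lt hp).comp (Filter.tendsto_add_atTop_nat 1)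
  refine summable_of_ratio_norm_eventually_le (r := 1 / 2) (by norm_num) ?_
  filter_upwards [hpow.eventually_ge_atTop (2 * |x| + 1)] with n hn
  have hden : 0 < p ^ (n + 1) - 1 := sub_pos.mpr (one_lt_pow₀ hp n.succ_ne_zero)
  have hratio : |x| / (p ^ (n + 1) - 1) ≤ 1 / 2 := by
    rw [div_le_iff₀ hden]; linarith
  simp only [norm_div, norm_pow, Real.norm_eq_abs, abs_abs, abs_pPoch_succ hp, abs_mul,
    abs_of_pos hden]
  calc |x| ^ (n + 1) / (|pPoch p n| * (p ^ (n + 1) - 1))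
      = |x| ^ n / |pPoch p n| * (|x| / (p ^ (n + 1) - 1)) := by
        rw [pow_succ, mul_div_mul_comm]
    _ ≤ 1 / 2 * (|x| ^ n / |pPoch p n|) := by
        rw [mul_comm (1 / 2)]; gcongr

lemma summable_mul_pow_div_pPoch {p C : ℝ} (hp : 1 < p) {c : ℕ → ℝ}
    (hc : ∀ n, |c n| ≤ C ^ n) (w : ℂ) :
    Summable fun n => ((c n / pPoch p n : ℝ) : ℂ) * w ^ n := by
  refine (summable_pow_div_abs_pPoch hp (C * ‖w‖)).of_norm_bounded fun n => ?_
  rw [norm_mul, Complex.norm_real, norm_pow, Real.norm_eq_abs, abs_div, mul_pow,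
    div_mul_eq_mul_div]
  gcongr
  exact hc n

lemma tsum_add_tsum_add_tsum_eq_zero {G : Type*} [AddCommGroup G] [TopologicalSpace G]
    [IsTopologicalAddGroup G] [T2Space G] {f g h : ℕ → G}
    (hf : Summable f) (hg : Summable g) (hh : Summable h) (h₀ : f 0 = 0) (h₁ : f 1 + g 0 = 0)
    (h₂ : ∀ n, f (n + 2) + g (n + 1) + h n = 0) :
    ∑' n, f n + ∑' n, g n + ∑' n, h n = 0 := by
  have hf₁ : Summable fun n => f (n + 1) := (summable_nat_add_iff 1).mpr hf
  have hf₂ : Summable fun n => f (n + 2) := (summable_nat_add_iff 2).mpr hf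
  have hg₁ : Summable fun n => g (n + 1) := (summable_nat_add_iff 1).mpr hg
  calc ∑' n, f n + ∑' n, g n + ∑' n, h n
      = f 0 + (f 1 + g 0) + ∑' n, (f (n + 2) + g (n + 1) + h n) := by
        rw [(hf₂.add hg₁).tsum_add hh, hf₂.tsum_add hg₁, hf.tsum_eq_zero_add,
          hf₁.tsum_eq_zero_add, hg.tsum_eq_zero_add]
        abel
    _ = 0 := by simp [h₀, h₁, h₂]

lemma qDifference_eq_zero_of_coeff {p a : ℂ} (hp : p ≠ 0) {b : ℕ → ℂ}
    (hb : ∀ w, Summable fun n => b n * w ^ n)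
    (hb₁ : b 1 * (p - 1) + (a + 1) * b 0 = 0)
    (hb₂ : ∀ n, b (n + 2) * (p ^ (n + 2) - 1) + (a + 1) * b (n + 1)
      + a * p⁻¹ ^ (n + 1) * b n = 0)
    {F : ℂ → ℂ} (hF : ∀ w, F w = ∑' n, b n * (p * w) ^ n) (z : ℂ) :
    F z - (1 - (a + 1) * z) * F (p⁻¹ * z) + a * p⁻¹ * z ^ 2 * F (p⁻¹ ^ 2 * z) = 0 := by
  have hF₁ : F (p⁻¹ * z) = ∑' n, b n * z ^ n := by rw [hF, mul_inv_cancel_left₀ hp]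
  have hF₂ : F (p⁻¹ ^ 2 * z) = ∑' n, b n * (p⁻¹ * z) ^ n := by
    rw [hF, sq, ← mul_assoc, mul_inv_cancel_left₀ hp]
  rw [hF₁, hF₂, hF]
  calc _ = (∑' n, b n * (p * z) ^ n - ∑' n, b n * z ^ n) + (a + 1) * z * ∑' n, b n * z ^ n
        + a * p⁻¹ * z ^ 2 * ∑' n, b n * (p⁻¹ * z) ^ n := by ring
    _ = ∑' n, (b n * (p * z) ^ n - b n * z ^ n) + ∑' n, (a + 1) * z * (b n * z ^ n)
        + ∑' n, a * p⁻¹ * z ^ 2 * (b n * (p⁻¹ * z) ^ n) := by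
      rw [(hb _).tsum_sub (hb z), tsum_mul_left, tsum_mul_left]
    _ = 0 := by
      refine tsum_add_tsum_add_tsum_eq_zero ((hb _).sub (hb z)) ((hb z).mul_left _)
        ((hb _).mul_left _) (by simp) (by linear_combination z * hb₁) fun n => ?_
      linear_combination z ^ (n + 2) * hb₂ n

lemma rogersSzego_inv_div_pPoch_one {p : ℝ} (hp : ∀ n : ℕ, p ^ (n + 1) ≠ 1) (x : ℝ) :
    rogersSzego p⁻¹ x 1 / pPoch p 1 * (p - 1) + (x + 1) * (rogersSzego p⁻¹ x 0 / pPoch p 0)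
      = 0 := by
  have hq : ∀ n : ℕ, p⁻¹ ^ (n + 1) ≠ 1 := fun n => by rw [inv_pow, inv_ne_one]; exact hp n
  have : 1 - p ≠ 0 := sub_ne_zero.mpr (by simpa using (hp 0).symm)
  rw [rogersSzego_one hq, rogersSzego_zero hq, show pPoch p 1 = 1 - p by simp [pPoch],
    pPoch_zero]
  field_simp
  ring

lemma rogersSzego_inv_div_pPoch_add_two {p : ℝ} (hp₀ : p ≠ 0)
    (hp : ∀ n : ℕ, p ^ (n + 1) ≠ 1) (x : ℝ) (n : ℕ) :
    rogersSzego p⁻¹ x (n + 2) / pPoch p (n + 2) * (p ^ (n + 2) - 1)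
      + (x + 1) * (rogersSzego p⁻¹ x (n + 1) / pPoch p (n + 1))
      + x * p⁻¹ ^ (n + 1) * (rogersSzego p⁻¹ x n / pPoch p n) = 0 := by
  have hq : ∀ n : ℕ, p⁻¹ ^ (n + 1) ≠ 1 := fun n => by rw [inv_pow, inv_ne_one]; exact hp n
  rw [rogersSzego_add_two hq, pPoch_succ, pPoch_succ, inv_pow]
  have := pPoch_ne_zero hp n
  have := sub_ne_zero.mpr (hp n).symm
  have := sub_ne_zero.mpr (hp (n + 1)).symm
  field_simp
  ring

theorem stmt12_general (a p : ℝ) (hp : 1 < p)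
    (ω : ℕ → ℝ)
    (hω : ∀ k : ℕ, ω k = ∑ j ∈ range (k + 1),
      pBinom p k j * p ^ (-(j * (k - j) : ℤ)) * a ^ j)
    (G : ℂ → ℂ)
    (hG : ∀ z : ℂ, G z = ∑' k : ℕ, (ω k : ℂ) * ((p : ℂ) * z) ^ k / (pPoch p k : ℂ))
    (z : ℂ) :
    G z - (1 - ((a : ℂ) + 1) * z) * G ((p : ℂ)⁻¹ * z)
      + (a : ℂ) * (p : ℂ)⁻¹ * z ^ 2 * G ((p : ℂ)⁻¹ ^ 2 * z) = 0 := by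
  have hp₀ : p ≠ 0 := by positivity
  have hp₁ := pow_succ_ne_one_of_one_lt hp
  have hωH : ∀ k, ω k = rogersSzego p⁻¹ a k := fun k =>
    (hω k).trans <| sum_congr rfl fun j hj => by
      rw [pBinom_mul_zpow_eq_pBinom_inv hp₀ (Nat.lt_succ_iff.mp (mem_range.mp hj))]
  have hH : ∀ k, |rogersSzego p⁻¹ a k| ≤ (1 + |a|) ^ k :=
    abs_rogersSzego_le (by positivity) (inv_lt_one_of_one_lt₀ hp) a
  refine qDifference_eq_zero_of_coeff
    (b := fun k => ((rogersSzego p⁻¹ a k / pPoch p k : ℝ) : ℂ)) (by exact_mod_cast hp₀)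
    (summable_mul_pow_div_pPoch hp hH) ?_ (fun k => ?_) (fun w => ?_) z
  · exact_mod_cast rogersSzego_inv_div_pPoch_one hp₁ a
  · have := congrArg ((↑) : ℝ → ℂ) (rogersSzego_inv_div_pPoch_add_two hp₀ hp₁ a k)
    push_cast at this ⊢
    linear_combination this
  · rw [hG]
    refine tsum_congr fun k => ?_
    rw [hωH]
    push_cast
    ring

/-- The entire function `G(z) = ∑ₖ ω_k(a,p)(pz)ᵏ/(p;p)ₖ` satisfies
`G(z) − (1−(a+1)z) G(p⁻¹z) + a p⁻¹ z² G(p⁻²z) = 0`. -/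
theorem stmt12 (a p : ℝ) (ha : 0 < a) (hp : 1 < p)
    (ω : ℕ → ℝ)
    (hω : ∀ k : ℕ, ω k = ∑ j ∈ range (k + 1),
      pBinom p k j * p ^ (-(j * (k - j) : ℤ)) * a ^ j)
    (G : ℂ → ℂ)
    (hG : ∀ z : ℂ, G z = ∑' k : ℕ, (ω k : ℂ) * ((p : ℂ) * z) ^ k / (pPoch p k : ℂ))
    (z : ℂ) :
    G z - (1 - ((a : ℂ) + 1) * z) * G ((p : ℂ)⁻¹ * z)
      + (a : ℂ) * (p : ℂ)⁻¹ * z ^ 2 * G ((p : ℂ)⁻¹ ^ 2 * z) = 0 :=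
  stmt12_general a p hp ω hω G hG z
end

section
/- The moment sequence m_n(a,q) = ⟨e_0, J(a,q)^n e_0⟩ satisfies m_0 = 1 and the quadratic recurrence m_{n+1}(a,q) = (a+1) m_n(a,q) + a ∑_{k=0}^{n-1} q^{-k-1} m_k(a,q) m_{n-k-1}(a,q) for n ∈ ℤ₊. -/
open Finset

/-- Action of the Jacobi matrix `J(a,q)` (with diagonal `βₙ = (a+1)q^{-n}` and
off-diagonal `αₙ = √a q^{-n-1/2}`) on sequences. -/
noncomputable def jacobiApply (a q : ℝ) (f : ℕ → ℝ) : ℕ → ℝ := fun n =>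
  (if n = 0 then 0 else
      Real.sqrt a * q ^ (-(n - 1 : ℕ) : ℤ) / Real.sqrt q * f (n - 1))
    + (a + 1) * q ^ (-(n : ℤ)) * f n
    + Real.sqrt a * q ^ (-(n : ℤ)) / Real.sqrt q * f (n + 1)

/-!
Write `σ` for the left shift of sequences and `c = √a / √q`. Since
`α_{n+1} = q⁻¹ αₙ` and `β_{n+1} = q⁻¹ βₙ`, the Jacobi operator almost commutes with the
shift: `σ (J f) = q⁻¹ J (σ f) + c f(0) e₀`. Iterating this on `vₙ = Jⁿ e₀` expresses
`σ vₙ` as `c ∑_{k<n} q^{-k} m_{n-1-k} v_k`, and reading off the `0`-th entry of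
`v_{n+1} = J vₙ` gives `m_{n+1} = (a+1) mₙ + c (σ vₙ)(0)`, which is the recurrence
because `c² = a / q`.
-/

namespace JacobiMoments

variable (a q : ℝ)

noncomputable def orbit (n : ℕ) : ℕ → ℝ :=
  (jacobiApply a q)^[n] (fun j => if j = 0 then 1 else 0)

theorem orbit_zero_apply (j : ℕ) : orbit a q 0 j = if j = 0 then 1 else 0 := rfl

theorem orbit_succ (n : ℕ) : orbit a q (n + 1) = jacobiApply a q (orbit a q n) :=
  Function.iterate_succ_apply' _ _ _

theorem jacobiApply_sum (s : Finset ℕ) (g : ℕ → ℝ) (F : ℕ → ℕ → ℝ) (j : ℕ) :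
    jacobiApply a q (fun x => ∑ k ∈ s, g k * F k x) j
      = ∑ k ∈ s, g k * jacobiApply a q (F k) j := by
  simp only [jacobiApply]
  by_cases h : j = 0 <;>
    simp [h, Finset.mul_sum, Finset.sum_add_distrib, mul_add, mul_left_comm, mul_comm,
      mul_assoc]

theorem jacobiApply_apply_zero (f : ℕ → ℝ) :
    jacobiApply a q f 0 = (a + 1) * f 0 + Real.sqrt a / Real.sqrt q * f 1 := by
  simp only [jacobiApply, if_true, Nat.cast_zero, neg_zero, zpow_zero]
  ring

variable {q}

theorem jacobiApply_apply_succ (hq : q ≠ 0) (f : ℕ → ℝ) (n : ℕ) :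
    jacobiApply a q f (n + 1)
      = q⁻¹ * jacobiApply a q (fun k => f (k + 1)) n
        + if n = 0 then Real.sqrt a / Real.sqrt q * f 0 else 0 := by
  rcases n with _ | n
  · simp only [jacobiApply, Nat.add_sub_cancel, Nat.succ_ne_zero, if_false, if_true,
      Nat.cast_zero, neg_zero, zpow_zero]
    rw [show (-(0 + 1 : ℕ) : ℤ) = -1 by norm_num, zpow_neg_one]
    ring
  · simp only [jacobiApply, Nat.add_sub_cancel, Nat.succ_ne_zero, if_false]
    rw [show (-(n + 1 + 1 : ℕ) : ℤ) = -(n : ℕ) + -1 + -1 by push_cast; ring,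
      show (-(n + 1 : ℕ) : ℤ) = -(n : ℕ) + -1 by push_cast; ring]
    simp only [zpow_add₀ hq, zpow_neg_one]
    ring

theorem orbit_apply_succ (hq : q ≠ 0) (n j : ℕ) :
    orbit a q n (j + 1) = Real.sqrt a / Real.sqrt q *
      ∑ k ∈ range n, q ^ (-(k : ℤ)) * orbit a q (n - 1 - k) 0 * orbit a q k j := by
  induction n generalizing j with
  | zero => simp [orbit_zero_apply]
  | succ n ih =>
    set c := Real.sqrt a / Real.sqrt q
    have shifted : (fun k => orbit a q n (k + 1))
        = fun x => ∑ k ∈ range n, (c * (q ^ (-(k : ℤ)) * orbit a q (n - 1 - k) 0)) *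
            orbit a q k x := by
      funext x
      rw [ih x, Finset.mul_sum]
      exact Finset.sum_congr rfl fun k _ => by ring
    rw [orbit_succ, jacobiApply_apply_succ a hq, shifted, jacobiApply_sum,
      Finset.sum_range_succ', mul_add, Finset.mul_sum, Finset.mul_sum]
    congr 1
    · refine Finset.sum_congr rfl fun k hk => ?_
      rw [← orbit_succ, Nat.cast_succ, neg_add, zpow_add₀ hq, zpow_neg_one,
        show n + 1 - 1 - (k + 1) = n - 1 - k by omega]
      ring
    · rcases eq_or_ne j 0 with h | h <;> simp [h, orbit_zero_apply, c]

theorem orbit_succ_apply_zero (ha : 0 ≤ a) (hq : 0 < q) (n : ℕ) :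
    orbit a q (n + 1) 0 = (a + 1) * orbit a q n 0 +
      a * ∑ k ∈ range n, q ^ (-(k : ℤ) - 1) * orbit a q k 0 * orbit a q (n - k - 1) 0 := by
  have hc : Real.sqrt a / Real.sqrt q * (Real.sqrt a / Real.sqrt q) = a / q := by
    rw [div_mul_div_comm, Real.mul_self_sqrt ha, Real.mul_self_sqrt hq.le]
  rw [orbit_succ, jacobiApply_apply_zero, orbit_apply_succ a hq.ne', ← mul_assoc, hc,
    Finset.mul_sum, Finset.mul_sum]
  congr 1
  refine Finset.sum_congr rfl fun k hk => ?_
  rw [zpow_sub_one₀ hq.ne', show n - 1 - k = n - k - 1 by omega]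
  field_simp

end JacobiMoments

open JacobiMoments in
theorem stmt13_general (a q : ℝ) (ha : 0 < a) (hq0 : 0 < q)
    (m : ℕ → ℝ)
    (hm : ∀ n : ℕ,
      m n = ((jacobiApply a q)^[n] (fun j => if j = 0 then 1 else 0)) 0) :
    m 0 = 1 ∧ ∀ n : ℕ, m (n + 1) = (a + 1) * m n
      + a * ∑ k ∈ range n, q ^ (-(k : ℤ) - 1) * m k * m (n - k - 1) := by
  obtain rfl : m = fun n => orbit a q n 0 := funext hm
  exact ⟨rfl, orbit_succ_apply_zero a ha.le hq0⟩

/-- The moments `mₙ(a,q) = ⟨e₀, J(a,q)ⁿ e₀⟩` satisfy `m₀ = 1` and the quadratic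
recurrence `m_{n+1} = (a+1) mₙ + a ∑_{k<n} q^{-k-1} m_k m_{n-k-1}`. -/
theorem stmt13 (a q : ℝ) (ha : 0 < a) (hq0 : 0 < q) (hq1 : q < 1)
    (m : ℕ → ℝ)
    (hm : ∀ n : ℕ,
      m n = ((jacobiApply a q)^[n] (fun j => if j = 0 then 1 else 0)) 0) :
    m 0 = 1 ∧ ∀ n : ℕ, m (n + 1) = (a + 1) * m n
      + a * ∑ k ∈ range n, q ^ (-(k : ℤ) - 1) * m k * m (n - k - 1) :=
  stmt13_general a q ha hq0 m hm
end

section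
/- The moments satisfy the lower bounds m_{2n}(a,q) ≥ a^n q^{-n²} and m_{2n+1}(a,q) ≥ (a+1) a^n q^{-n(n+1)} for all n ∈ ℤ₊. -/
open Finset

/-- Lower bounds `m_{2n} ≥ aⁿ q^{-n²}` and `m_{2n+1} ≥ (a+1) aⁿ q^{-n(n+1)}`
for the moment sequence. -/
theorem stmt15 (a q : ℝ) (ha : 0 < a) (hq0 : 0 < q) (hq1 : q < 1)
    (m : ℕ → ℝ)
    (hm0 : m 0 = 1)
    (hmrec : ∀ n : ℕ, m (n + 1) = (a + 1) * m n
      + a * ∑ k ∈ range n, q ^ (-(k : ℤ) - 1) * m k * m (n - k - 1)) :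
    ∀ n : ℕ, a ^ n * q ^ (-(n ^ 2 : ℕ) : ℤ) ≤ m (2 * n)
      ∧ (a + 1) * a ^ n * q ^ (-(n * (n + 1) : ℕ) : ℤ) ≤ m (2 * n + 1) := by
  have hpos : ∀ n, 0 < m n := by
    intro n
    induction n using Nat.strong_induction_on with
    | _ n ih =>
      match n with
      | 0 => simp [hm0]
      | Nat.succ n =>
        rw [hmrec]
        have h1 : 0 < (a + 1) * m n := mul_pos (by linarith) (ih n (by omega))
        have h2 : 0 ≤ a * ∑ k ∈ range n, q ^ (-(k : ℤ) - 1) * m k * m (n - k - 1) := by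
          refine mul_nonneg ha.le (Finset.sum_nonneg fun k hk => ?_)
          exact mul_nonneg (mul_nonneg (zpow_pos hq0 _).le (ih k (by
            simp only [Finset.mem_range] at hk; omega)).le)
            (ih (n - k - 1) (by simp only [Finset.mem_range] at hk; omega)).le
        linarith
  have hstep : ∀ n : ℕ, a * q ^ (-(n : ℤ) - 1) * m n ≤ m (n + 2) := by
    intro n
    rw [hmrec (n + 1)]
    have hmem : n ∈ range (n + 1) := by simp
    have hsum : q ^ (-(n : ℤ) - 1) * m n * m (n + 1 - n - 1)
        ≤ ∑ k ∈ range (n + 1), q ^ (-(k : ℤ) - 1) * m k * m (n + 1 - k - 1) := by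
      refine Finset.single_le_sum (f := fun k : ℕ => q ^ (-(k : ℤ) - 1) * m k * m (n + 1 - k - 1)) (fun k hk => ?_) hmem
      exact mul_nonneg (mul_nonneg (zpow_pos hq0 _).le (hpos k).le) (hpos _).le
    have h0 : m (n + 1 - n - 1) = 1 := by simp [hm0]
    rw [h0, mul_one] at hsum
    have h1 : 0 < (a + 1) * m (n + 1) := mul_pos (by linarith) (hpos _)
    have h2 : a * (q ^ (-(n : ℤ) - 1) * m n)
        ≤ a * ∑ k ∈ range (n + 1), q ^ (-(k : ℤ) - 1) * m k * m (n + 1 - k - 1) :=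
      mul_le_mul_of_nonneg_left hsum ha.le
    nlinarith
  intro n
  induction n with
  | zero =>
    constructor
    · simp [hm0]
    · rw [hmrec 0]; simp [hm0]
  | succ n ih =>
    obtain ⟨ihe, iho⟩ := ih
    constructor
    · have h2 : 2 * (n + 1) = (2 * n) + 2 := by ring
      rw [h2]
      have hs := hstep (2 * n)
      have hc : a * q ^ ((-(2 * n : ℕ) - 1 : ℤ)) * (a ^ n * q ^ (-(n ^ 2 : ℕ) : ℤ))
          ≤ a * q ^ ((-(2 * n : ℕ) - 1 : ℤ)) * m (2 * n) :=
        mul_le_mul_of_nonneg_left ihe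
          (mul_nonneg ha.le (zpow_pos hq0 _).le)
      calc a ^ (n + 1) * q ^ (-((n + 1) ^ 2 : ℕ) : ℤ)
          = a * q ^ ((-(2 * n : ℕ) - 1 : ℤ)) * (a ^ n * q ^ (-(n ^ 2 : ℕ) : ℤ)) := by
            have he : (-(((n + 1) ^ 2 : ℕ)) : ℤ) = (-(2 * n : ℕ) - 1) + (-(n ^ 2 : ℕ) : ℤ) := by
              push_cast; ring
            rw [he, zpow_add₀ (ne_of_gt hq0)]; ring
        _ ≤ m (2 * n + 2) := le_trans hc hs
    · have h2 : 2 * (n + 1) + 1 = (2 * n + 1) + 2 := by ring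
      rw [h2]
      have hs := hstep (2 * n + 1)
      have hc : a * q ^ ((-(2 * n + 1 : ℕ) - 1 : ℤ)) * ((a + 1) * a ^ n * q ^ (-(n * (n + 1) : ℕ) : ℤ))
          ≤ a * q ^ ((-(2 * n + 1 : ℕ) - 1 : ℤ)) * m (2 * n + 1) :=
        mul_le_mul_of_nonneg_left iho
          (mul_nonneg ha.le (zpow_pos hq0 _).le)
      calc (a + 1) * a ^ (n + 1) * q ^ (-((n + 1) * (n + 1 + 1) : ℕ) : ℤ)
          = a * q ^ ((-(2 * n + 1 : ℕ) - 1 : ℤ)) * ((a + 1) * a ^ n * q ^ (-(n * (n + 1) : ℕ) : ℤ)) := by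
            have he : (-(((n + 1) * (n + 1 + 1) : ℕ)) : ℤ) = (-(2 * n + 1 : ℕ) - 1) + (-(n * (n + 1) : ℕ) : ℤ) := by
              push_cast; ring
            rw [he, zpow_add₀ (ne_of_gt hq0)]; ring
        _ ≤ m ((2 * n + 1) + 2) := le_trans hc hs
end

section
/- For all n ∈ ℤ₊ and 0 < q < 1, a > 0, the quantity ω_n(a,q) = ∑_{k=0}^n [n choose k]_q q^{-k(n-k)} a^k satisfies a^{n/2} q^{-n(n-1)/4} ≤ ω_n(a,q) ≤ (1+a)^n q^{-n²/4}. -/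
/-!
Every summand is nonnegative, so `ωₙ` dominates its middle term `k = ⌊n/2⌋` or `⌈n/2⌉`
(whichever makes `aᵏ ≥ a^{n/2}`), where `k(n-k) ≥ n(n-1)/4` and `[n choose k]_q ≥ 1`.
Conversely `k(n-k) ≤ n²/4` and `[n choose k]_q ≤ (n choose k)` by the q-Pascal rule,
so the binomial theorem bounds `ωₙ` by `(1+a)ⁿ q^{-n²/4}`.
-/

open Finset

/-- `(q;q)_k = ∏_{i=1}^{k} (1 - qⁱ)`. -/
noncomputable def qqPoch (q : ℝ) (k : ℕ) : ℝ := ∏ i ∈ range k, (1 - q ^ (i + 1))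

/-- q-binomial (Gaussian) coefficient `[n choose k]_q`. -/
noncomputable def qBinom (q : ℝ) (n k : ℕ) : ℝ :=
  qqPoch q n / (qqPoch q k * qqPoch q (n - k))

section QBinomial

variable {q : ℝ}

lemma one_sub_pow_succ_pos (hq0 : 0 ≤ q) (hq1 : q < 1) (i : ℕ) : 0 < 1 - q ^ (i + 1) :=
  sub_pos.2 (pow_lt_one₀ hq0 hq1 i.succ_ne_zero)

lemma qqPoch_pos (hq0 : 0 ≤ q) (hq1 : q < 1) (k : ℕ) : 0 < qqPoch q k :=
  prod_pos fun i _ => one_sub_pow_succ_pos hq0 hq1 i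

lemma qqPoch_zero (q : ℝ) : qqPoch q 0 = 1 := prod_range_zero _

lemma qqPoch_succ (q : ℝ) (k : ℕ) : qqPoch q (k + 1) = qqPoch q k * (1 - q ^ (k + 1)) :=
  prod_range_succ _ _

lemma qqPoch_add (q : ℝ) (k m : ℕ) :
    qqPoch q (k + m) = qqPoch q k * ∏ i ∈ range m, (1 - q ^ (k + i + 1)) :=
  prod_range_add _ _ _

lemma qBinom_zero_right {n : ℕ} (h : qqPoch q n ≠ 0) : qBinom q n 0 = 1 := by
  simp [qBinom, qqPoch_zero, h]

lemma qBinom_self {n : ℕ} (h : qqPoch q n ≠ 0) : qBinom q n n = 1 := by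
  simp [qBinom, qqPoch_zero, h]

lemma one_le_qBinom (hq0 : 0 ≤ q) (hq1 : q < 1) {n k : ℕ} (hk : k ≤ n) :
    1 ≤ qBinom q n k := by
  obtain ⟨m, rfl⟩ := Nat.exists_eq_add_of_le hk
  have hm : qqPoch q m ≤ ∏ i ∈ range m, (1 - q ^ (k + i + 1)) := by
    refine prod_le_prod (fun i _ => (one_sub_pow_succ_pos hq0 hq1 i).le) fun i _ => ?_
    have : q ^ (k + i + 1) ≤ q ^ (i + 1) := pow_le_pow_of_le_one hq0 hq1.le (by omega)
    linarith
  have hk := qqPoch_pos hq0 hq1 k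
  rw [qBinom, Nat.add_sub_cancel_left, one_le_div (mul_pos hk (qqPoch_pos hq0 hq1 m)),
    qqPoch_add]
  exact mul_le_mul_of_nonneg_left hm hk.le

lemma qBinom_add_two_succ (hq0 : 0 ≤ q) (hq1 : q < 1) (k m : ℕ) :
    qBinom q (k + m + 2) (k + 1) =
      qBinom q (k + m + 1) (k + 1) + q ^ (m + 1) * qBinom q (k + m + 1) k := by
  have h1 := (qqPoch_pos hq0 hq1 (k + m + 1)).ne'
  have h2 := (qqPoch_pos hq0 hq1 k).ne'
  have h3 := (qqPoch_pos hq0 hq1 m).ne'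
  have h4 := (one_sub_pow_succ_pos hq0 hq1 k).ne'
  have h5 := (one_sub_pow_succ_pos hq0 hq1 m).ne'
  rw [qBinom, qBinom, qBinom, show k + m + 2 - (k + 1) = m + 1 by omega,
    show k + m + 1 - (k + 1) = m by omega, show k + m + 1 - k = m + 1 by omega,
    qqPoch_succ q (k + m + 1), qqPoch_succ q k, qqPoch_succ q m]
  field_simp
  ring

theorem qBinom_le_choose (hq0 : 0 ≤ q) (hq1 : q < 1) {n k : ℕ} (hk : k ≤ n) :
    qBinom q n k ≤ n.choose k := by
  induction n generalizing k with
  | zero =>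
    obtain rfl : k = 0 := by omega
    simp [qBinom_zero_right (qqPoch_pos hq0 hq1 0).ne']
  | succ n ih =>
    rcases k with _ | k
    · simp [qBinom_zero_right (qqPoch_pos hq0 hq1 _).ne']
    rcases hk.lt_or_eq with hlt | heq
    · obtain ⟨m, rfl⟩ : ∃ m, n = k + m + 1 := ⟨n - k - 1, by omega⟩
      have hqm : q ^ (m + 1) ≤ 1 := pow_le_one₀ hq0 hq1.le
      have hshift : q ^ (m + 1) * qBinom q (k + m + 1) k ≤ (k + m + 1).choose k :=
        calc q ^ (m + 1) * qBinom q (k + m + 1) k ≤ 1 * qBinom q (k + m + 1) k :=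
              mul_le_mul_of_nonneg_right hqm (zero_le_one.trans (one_le_qBinom hq0 hq1 (by omega)))
          _ ≤ (k + m + 1).choose k := by rw [one_mul]; exact ih (by omega)
      rw [qBinom_add_two_succ hq0 hq1, Nat.choose_succ_succ', Nat.cast_add]
      linarith [ih (k := k + 1) (by omega)]
    · obtain rfl : k = n := by omega
      simp [qBinom_self (qqPoch_pos hq0 hq1 _).ne']

end QBinomial

lemma zpow_le_rpow_of_exponent_ge {q : ℝ} (hq0 : 0 < q) (hq1 : q ≤ 1) {m : ℤ} {x : ℝ}
    (h : x ≤ m) : q ^ m ≤ q ^ x := by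
  rw [← Real.rpow_intCast]
  exact Real.rpow_le_rpow_of_exponent_ge hq0 hq1 h

lemma rpow_le_zpow_of_exponent_ge {q : ℝ} (hq0 : 0 < q) (hq1 : q ≤ 1) {m : ℤ} {x : ℝ}
    (h : m ≤ x) : q ^ x ≤ q ^ m := by
  rw [← Real.rpow_intCast]
  exact Real.rpow_le_rpow_of_exponent_ge hq0 hq1 h

lemma mul_sub_le_sq_div_four (n k : ℝ) : k * (n - k) ≤ n ^ 2 / 4 := by
  nlinarith [sq_nonneg (n - 2 * k)]

lemma mul_sub_one_le_four_mul_mul_sub {n k : ℕ} (hk : k = n / 2 ∨ k = (n + 1) / 2) :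
    (n : ℝ) * (n - 1) ≤ 4 * k * (n - k) := by
  obtain ⟨m, rfl | rfl⟩ := Nat.even_or_odd' n <;>
  obtain rfl | rfl := hk <;>
  · simp only [show ∀ m, (2 * m) / 2 = m by omega, show ∀ m, (2 * m + 1) / 2 = m by omega,
      show ∀ m, (2 * m + 1 + 1) / 2 = m + 1 by omega]
    push_cast
    nlinarith

lemma exists_half_rpow_le_pow {a : ℝ} (ha : 0 < a) (n : ℕ) :
    ∃ k, (k = n / 2 ∨ k = (n + 1) / 2) ∧ a ^ ((n : ℝ) / 2) ≤ a ^ k := by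
  rcases le_or_gt 1 a with ha1 | ha1
  · refine ⟨(n + 1) / 2, Or.inr rfl, ?_⟩
    rw [← Real.rpow_natCast]
    refine Real.rpow_le_rpow_of_exponent_le ha1 ?_
    have : (n : ℝ) ≤ 2 * ((n + 1) / 2 : ℕ) := by
      exact_mod_cast (by omega : n ≤ 2 * ((n + 1) / 2))
    linarith
  · refine ⟨n / 2, Or.inl rfl, ?_⟩
    rw [← Real.rpow_natCast]
    refine Real.rpow_le_rpow_of_exponent_ge ha ha1.le ?_
    have : ((2 * (n / 2) : ℕ) : ℝ) ≤ n := by exact_mod_cast (by omega : 2 * (n / 2) ≤ n)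
    push_cast at this
    linarith

section Omega

variable {a q : ℝ}

lemma qBinom_term_nonneg (ha : 0 ≤ a) (hq0 : 0 ≤ q) (hq1 : q < 1) {n k : ℕ} (hk : k ≤ n) :
    0 ≤ qBinom q n k * q ^ (-(k * (n - k) : ℤ)) * a ^ k := by
  have := one_le_qBinom hq0 hq1 hk
  positivity

theorem le_sum_qBinom_mul (ha : 0 < a) (hq0 : 0 < q) (hq1 : q < 1) (n : ℕ) :
    a ^ ((n : ℝ) / 2) * q ^ (-(n * (n - 1) : ℝ) / 4) ≤
      ∑ k ∈ range (n + 1), qBinom q n k * q ^ (-(k * (n - k) : ℤ)) * a ^ k := by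
  obtain ⟨k, hk, hak⟩ := exists_half_rpow_le_pow ha n
  have hkn : k ≤ n := by omega
  have hq : q ^ (-(n * (n - 1) : ℝ) / 4) ≤ q ^ (-(k * (n - k) : ℤ)) := by
    refine rpow_le_zpow_of_exponent_ge hq0 hq1.le ?_
    have := mul_sub_one_le_four_mul_mul_sub hk
    push_cast [Nat.cast_sub hkn]
    linarith
  calc a ^ ((n : ℝ) / 2) * q ^ (-(n * (n - 1) : ℝ) / 4)
      ≤ a ^ k * q ^ (-(k * (n - k) : ℤ)) := by gcongr
    _ = 1 * q ^ (-(k * (n - k) : ℤ)) * a ^ k := by ring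
    _ ≤ qBinom q n k * q ^ (-(k * (n - k) : ℤ)) * a ^ k := by
      gcongr
      exact one_le_qBinom hq0.le hq1 hkn
    _ ≤ ∑ i ∈ range (n + 1), qBinom q n i * q ^ (-(i * (n - i) : ℤ)) * a ^ i := by
      refine single_le_sum (f := fun i => qBinom q n i * q ^ (-(i * (n - i) : ℤ)) * a ^ i)
        (fun i hi => qBinom_term_nonneg ha.le hq0.le hq1 ?_) (mem_range.2 (Nat.lt_succ_of_le hkn))
      exact Nat.lt_succ_iff.1 (mem_range.1 hi)

theorem sum_qBinom_mul_le (ha : 0 ≤ a) (hq0 : 0 < q) (hq1 : q < 1) (n : ℕ) :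
    ∑ k ∈ range (n + 1), qBinom q n k * q ^ (-(k * (n - k) : ℤ)) * a ^ k ≤
      (1 + a) ^ n * q ^ (-((n : ℝ) ^ 2) / 4) := by
  have hterm : ∀ k ∈ range (n + 1), qBinom q n k * q ^ (-(k * (n - k) : ℤ)) * a ^ k ≤
      n.choose k * q ^ (-((n : ℝ) ^ 2) / 4) * a ^ k := by
    intro k hk
    have hkn : k ≤ n := Nat.lt_succ_iff.1 (mem_range.1 hk)
    have hq : q ^ (-(k * (n - k) : ℤ)) ≤ q ^ (-((n : ℝ) ^ 2) / 4) := by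
      refine zpow_le_rpow_of_exponent_ge hq0 hq1.le ?_
      have := mul_sub_le_sq_div_four n k
      push_cast
      linarith
    have := one_le_qBinom hq0.le hq1 hkn
    gcongr
    exact qBinom_le_choose hq0.le hq1 hkn
  calc ∑ k ∈ range (n + 1), qBinom q n k * q ^ (-(k * (n - k) : ℤ)) * a ^ k
      ≤ ∑ k ∈ range (n + 1), n.choose k * q ^ (-((n : ℝ) ^ 2) / 4) * a ^ k :=
        sum_le_sum hterm
    _ = (1 + a) ^ n * q ^ (-((n : ℝ) ^ 2) / 4) := by
      rw [add_comm 1 a, add_pow, sum_mul]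
      exact sum_congr rfl fun k _ => by rw [one_pow, mul_one]; ring

end Omega

/-- Bounds `a^{n/2} q^{-n(n-1)/4} ≤ ωₙ(a,q) ≤ (1+a)ⁿ q^{-n²/4}`. -/
theorem stmt16 (a q : ℝ) (ha : 0 < a) (hq0 : 0 < q) (hq1 : q < 1)
    (ω : ℕ → ℝ)
    (hω : ∀ n : ℕ, ω n = ∑ k ∈ range (n + 1),
      qBinom q n k * q ^ (-(k * (n - k) : ℤ)) * a ^ k) :
    ∀ n : ℕ,
      a ^ ((n : ℝ) / 2) * q ^ (-(n * (n - 1) : ℝ) / 4) ≤ ω n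
      ∧ ω n ≤ (1 + a) ^ n * q ^ (-((n : ℝ) ^ 2) / 4) := by
  intro n
  rw [hω n]
  exact ⟨le_sum_qBinom_mul ha hq0 hq1 n, sum_qBinom_mul_le ha.le hq0 hq1 n⟩
end

section
/- For h > 0 and β ∈ ℝ: exp( − ∑_{k=1}^∞ e^{-hk} cos(βk) / (k sinh(hk)) ) = | ( e^{-2h + iβ} ; e^{-2h} )_∞ |². -/
/-!
Each factor has `‖z qʲ‖ < 1`, so it is `exp (log (1 - z qʲ))` with
`-log (1 - z qʲ) = ∑ₖ (z qʲ)ᵏ⁺¹ / (k + 1)`. This double series converges absolutely, and summing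
over `j` first (a geometric series in `qᵏ⁺¹`) gives
`-∑ⱼ log (1 - z qʲ) = ∑ₖ zᵏ⁺¹ / ((k + 1) (1 - qᵏ⁺¹))`. For `z = e^{-2h+iβ}` and `q = e^{-2h}`, twice
the real part of the `k`-th term is the `k`-th term on the left, since
`2 e^{-2x} / (1 - e^{-2x}) = e^{-x} / sinh x`; finally `‖∏‖² = exp (2 Re ∑ⱼ log (1 - z qʲ))`.
-/

open Complex

lemma mul_pow_succ_div_le {a b : ℝ} (ha₀ : 0 ≤ a) (ha : a ≤ 1) (hb₀ : 0 ≤ b) (hb : b ≤ 1)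
    (k : ℕ) : (a * b) ^ (k + 1) / (k + 1) ≤ a ^ k * b := by
  have hk : (1 : ℝ) ≤ k + 1 := by linarith [k.cast_nonneg (α := ℝ)]
  calc (a * b) ^ (k + 1) / (k + 1) ≤ (a * b) ^ (k + 1) := div_le_self (by positivity) hk
    _ = a ^ k * b * (a * b ^ k) := by ring
    _ ≤ a ^ k * b * 1 := by gcongr; nlinarith [pow_le_one₀ hb₀ hb (n := k), pow_nonneg hb₀ k]
    _ = a ^ k * b := mul_one _

namespace Complex

variable {z q : ℂ}

lemma norm_mul_pow_lt_one (hz : ‖z‖ < 1) (hq : ‖q‖ ≤ 1) (j : ℕ) : ‖z * q ^ j‖ < 1 := by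
  rw [norm_mul, norm_pow]
  exact (mul_le_of_le_one_right (norm_nonneg z) (pow_le_one₀ (norm_nonneg q) hq)).trans_lt hz

lemma hasSum_div_mul_one_sub_pow (hz : ‖z‖ < 1) (hq : ‖q‖ < 1) :
    HasSum (fun k : ℕ ↦ z ^ (k + 1) / ((k + 1) * (1 - q ^ (k + 1))))
      (-∑' j : ℕ, log (1 - z * q ^ j)) := by
  have hqj : ∀ j : ℕ, ‖q ^ j‖ ≤ 1 := fun j ↦ by
    rw [norm_pow]; exact pow_le_one₀ (norm_nonneg q) hq.le
  have hdouble : Summable fun p : ℕ × ℕ ↦ (z * q ^ p.1) ^ (p.2 + 1) / (p.2 + 1) := by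
    refine .of_norm_bounded ((summable_geometric_of_lt_one (norm_nonneg q) hq).mul_of_nonneg
      (summable_geometric_of_lt_one (norm_nonneg z) hz) (fun _ ↦ by positivity)
      (fun _ ↦ by positivity)) ?_
    rintro ⟨j, k⟩
    have hk : ‖(k : ℂ) + 1‖ = k + 1 := by exact_mod_cast norm_natCast (k + 1)
    simpa only [norm_div, norm_pow, norm_mul, hk, mul_comm (‖q‖ ^ j)] using
      mul_pow_succ_div_le (norm_nonneg z) hz.le (norm_nonneg _) (hqj j) k
  have hrow : ∀ j : ℕ, HasSum (fun k : ℕ ↦ (z * q ^ j) ^ (k + 1) / (k + 1))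
      (-log (1 - z * q ^ j)) := fun j ↦
    hasSum_taylorSeries_neg_log' (norm_mul_pow_lt_one hz hq.le j)
  have hcol : ∀ k : ℕ, HasSum (fun j : ℕ ↦ (z * q ^ j) ^ (k + 1) / (k + 1))
      (z ^ (k + 1) / ((k + 1) * (1 - q ^ (k + 1)))) := by
    intro k
    have hqk : ‖q ^ (k + 1)‖ < 1 := by
      rw [norm_pow]; exact pow_lt_one₀ (norm_nonneg q) hq (by omega)
    have := (hasSum_geometric_of_norm_lt_one hqk).mul_left (z ^ (k + 1) / (k + 1))
    rw [← div_eq_mul_inv, div_div] at this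
    exact this.congr_fun fun j ↦ by ring
  rw [← tsum_neg, (hdouble.hasSum.prod_fiberwise hrow).tsum_eq]
  exact ((Equiv.prodComm ℕ ℕ).hasSum_iff.2 hdouble.hasSum).prod_fiberwise hcol

lemma cexp_tsum_log_one_sub_mul_pow (hz : ‖z‖ < 1) (hq : ‖q‖ < 1) :
    exp (∑' j : ℕ, log (1 - z * q ^ j)) = ∏' j : ℕ, (1 - z * q ^ j) := by
  refine cexp_tsum_eq_tprod (fun j ↦ sub_ne_zero.2 fun h ↦ ?_) ?_
  · simpa [← h] using norm_mul_pow_lt_one hz hq.le j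
  · simpa only [← sub_eq_add_neg] using summable_log_one_add_of_summable
      ((summable_geometric_of_norm_lt_one hq).mul_left z).neg

end Complex

lemma Real.exp_neg_div_sinh (x : ℝ) :
    exp (-x) / sinh x = 2 * exp (-2 * x) / (1 - exp (-2 * x)) := by
  have hx : exp (-x) ≠ 0 := (exp_pos _).ne'
  have h2 : exp (-2 * x) = exp (-x) * exp (-x) := by
    rw [← exp_add]; ring_nf
  have h1 : 1 - exp (-x) * exp (-x) = exp (-x) * (2 * sinh x) := by
    rw [sinh_eq, mul_div_cancel₀ _ two_ne_zero, mul_sub, ← exp_add, ← exp_add]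
    simp
  rw [h2, h1, show 2 * (exp (-x) * exp (-x)) = exp (-x) * (2 * exp (-x)) by ring,
    mul_div_mul_left _ _ hx, mul_div_mul_left _ _ two_ne_zero]

lemma exp_mul_cos_div_sinh_eq_two_mul_re (h β : ℝ) (k : ℕ) :
    Real.exp (-h * (k + 1)) * Real.cos (β * (k + 1)) / ((k + 1) * Real.sinh (h * (k + 1)))
      = 2 * (exp (-2 * h + I * β) ^ (k + 1)
          / ((k + 1) * (1 - exp (-2 * h) ^ (k + 1)))).re := by
  have hre : (exp (-2 * h + I * β) ^ (k + 1) / ((k + 1) * (1 - exp (-2 * h) ^ (k + 1)))).re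
      = Real.exp (-2 * h * (k + 1)) * Real.cos (β * (k + 1))
          / ((k + 1) * (1 - Real.exp (-2 * h * (k + 1)))) := by
    have hden : ((k : ℂ) + 1) * (1 - exp (-2 * h) ^ (k + 1))
        = (((k + 1) * (1 - Real.exp (-2 * h * (k + 1))) : ℝ) : ℂ) := by
      rw [← exp_nat_mul]; push_cast; ring_nf
    rw [hden, div_ofReal_re, ← exp_nat_mul, exp_re]
    congr 3 <;> simp <;> ring
  rw [hre, mul_comm _ (Real.sinh _), mul_div_mul_comm, neg_mul, Real.exp_neg_div_sinh,
    ← mul_assoc (-2)]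
  simp only [div_eq_mul_inv, mul_inv]
  ring

/-- For `h > 0` and `β ∈ ℝ`:
`exp(−∑_{k≥1} e^{-hk} cos(βk)/(k sinh(hk))) = |(e^{-2h+iβ}; e^{-2h})_∞|²`. -/
theorem stmt17 (h β : ℝ) (hh : 0 < h) :
    Real.exp (-∑' k : ℕ,
        Real.exp (-h * (k + 1)) * Real.cos (β * (k + 1))
          / ((k + 1) * Real.sinh (h * (k + 1))))
      = ‖(∏' j : ℕ,
          (1 - Complex.exp (-2 * h + Complex.I * β) * Complex.exp (-2 * h) ^ j) : ℂ)‖ ^ 2 := by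
  have hq : ‖Complex.exp (-2 * h)‖ < 1 := by
    rw [norm_exp, Real.exp_lt_one_iff]; simpa using hh
  have hz : ‖Complex.exp (-2 * h + Complex.I * β)‖ < 1 := by
    rw [norm_exp, Real.exp_lt_one_iff]; simpa using hh
  have hsum := (hasSum_re (hasSum_div_mul_one_sub_pow hz hq)).mul_left 2
  simp only [← exp_mul_cos_div_sinh_eq_two_mul_re] at hsum
  rw [← cexp_tsum_log_one_sub_mul_pow hz hq, norm_exp, ← Real.exp_nat_mul, hsum.tsum_eq]
  simp
end

section
/- For 0 < q < 1 and real x with q^{-1/2} ≤ x, for all integers k with 1 ≤ k ≤ K(x) := ⌊1/2 − ln(x)/ln(q)⌋, one has |(x;q)_k| ≥ q^{k(k-1)/2} x^k (q^{1/2};q)_k, and in particular |(x;q)_k| ≥ q^{k(k-1)/2} (q^{1/2};q)_∞ x^k. -/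
/-!
Pair the factor `1 - x qʲ` of `(x;q)_k` with the factor `1 - q^{1/2} q^{k-1-j}` of the reflected
product `(q^{1/2};q)_k`. The hypothesis on `k` says exactly that `x q^{k-1/2} ≥ 1`, so the product
`u v` of `u = x qʲ` and `v = q^{1/2} q^{k-1-j}` is at least `1`, whence
`|1 - u| ≥ u - 1 ≥ u - u v = u (1 - v)`. Multiplying over `j < k` gives the first bound, and the
second follows since the factors of `(q^{1/2};q)_∞` lie in `[0, 1]`.
-/

open Finset

/-- Finite real q-Pochhammer symbol `(x;q)_k = ∏_{j<k} (1 - x qʲ)`. -/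
noncomputable def qPochR (x q : ℝ) (k : ℕ) : ℝ := ∏ j ∈ range k, (1 - x * q ^ j)

lemma mul_one_sub_le_abs_one_sub {u v : ℝ} (h : 1 ≤ u * v) : u * (1 - v) ≤ |1 - u| := by
  rw [abs_sub_comm]
  calc u * (1 - v) = u - u * v := by ring
    _ ≤ u - 1 := by linarith
    _ ≤ |u - 1| := le_abs_self _

lemma pow_mul_pow_mul_qPochR_eq_prod (a x q : ℝ) (k : ℕ) :
    q ^ (k * (k - 1) / 2) * x ^ k * qPochR a q k
      = ∏ j ∈ range k, x * q ^ j * (1 - a * q ^ (k - 1 - j)) := by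
  rw [prod_mul_distrib, prod_mul_distrib, prod_const, prod_pow_eq_pow_sum, sum_range_id,
    card_range, qPochR, ← prod_range_reflect (fun j => 1 - a * q ^ j) k]
  ring

section

variable {q : ℝ}

lemma sqrt_mul_pow_le_one (hq0 : 0 ≤ q) (hq1 : q ≤ 1) (n : ℕ) : √q * q ^ n ≤ 1 :=
  mul_le_one₀ (Real.sqrt_le_one.mpr hq1) (pow_nonneg hq0 n) (pow_le_one₀ hq0 hq1)

lemma one_le_mul_sqrt_mul_pow_of_le_floor {x : ℝ} {k n : ℕ} (hq0 : 0 < q) (hq1 : q < 1)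
    (hx0 : 0 < x) (hkK : (k : ℤ) ≤ ⌊(1 : ℝ) / 2 - Real.log x / Real.log q⌋) (hn : n < k) :
    1 ≤ x * (√q * q ^ n) := by
  have hlogq : Real.log q < 0 := Real.log_neg hq0 hq1
  have hnK : (n : ℝ) + 1 ≤ 1 / 2 - Real.log x / Real.log q := by
    have : ((n + 1 : ℕ) : ℤ) ≤ ⌊(1 : ℝ) / 2 - Real.log x / Real.log q⌋ := by omega
    exact_mod_cast Int.le_floor.mp this
  have hlog : Real.log (x * (√q * q ^ n)) = Real.log x + (n + 1 / 2) * Real.log q := by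
    rw [Real.log_mul hx0.ne' (by positivity), Real.log_mul (by positivity) (by positivity),
      Real.log_sqrt hq0.le, Real.log_pow]
    ring
  rw [← Real.log_nonneg_iff (by positivity), hlog]
  have : (n + 1 / 2 : ℝ) ≤ -Real.log x / Real.log q := by rw [neg_div]; linarith
  linarith [(le_div_iff_of_neg hlogq).mp this]

theorem pow_mul_pow_mul_qPochR_sqrt_le_abs_qPochR {x : ℝ} {k : ℕ} (hq0 : 0 < q) (hq1 : q < 1)
    (hx0 : 0 < x) (hkK : (k : ℤ) ≤ ⌊(1 : ℝ) / 2 - Real.log x / Real.log q⌋) :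
    q ^ (k * (k - 1) / 2) * x ^ k * qPochR √q q k ≤ |qPochR x q k| := by
  rw [pow_mul_pow_mul_qPochR_eq_prod, qPochR, abs_prod]
  refine prod_le_prod (fun j _ => ?_) (fun j hj => mul_one_sub_le_abs_one_sub ?_)
  · exact mul_nonneg (by positivity) (sub_nonneg.mpr (sqrt_mul_pow_le_one hq0.le hq1.le _))
  · have hjk := mem_range.mp hj
    have hsplit : q ^ (k - 1) = q ^ j * q ^ (k - 1 - j) := by rw [← pow_add]; congr 1; omega
    calc 1 ≤ x * (√q * q ^ (k - 1)) :=
          one_le_mul_sqrt_mul_pow_of_le_floor hq0 hq1 hx0 hkK (by omega)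
      _ = x * q ^ j * (√q * q ^ (k - 1 - j)) := by rw [hsplit]; ring

lemma multipliable_one_sub_mul_pow (a : ℝ) (hq0 : 0 ≤ q) (hq1 : q < 1) :
    Multipliable fun j : ℕ => 1 - a * q ^ j := by
  simpa only [sub_eq_add_neg] using
    Real.multipliable_one_add_of_summable ((summable_geometric_of_lt_one hq0 hq1).mul_left a).neg

end

lemma tprod_le_prod_range_of_le_one {f : ℕ → ℝ} (hf : Multipliable f) (h0 : ∀ j, 0 ≤ f j)
    (h1 : ∀ j, f j ≤ 1) (k : ℕ) : ∏' j, f j ≤ ∏ j ∈ range k, f j := by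
  refine Antitone.le_of_tendsto (antitone_nat_of_succ_le fun n => ?_) hf.hasProd.tendsto_prod_nat k
  rw [prod_range_succ]
  exact mul_le_of_le_one_right (prod_nonneg fun j _ => h0 j) (h1 n)

theorem stmt19_general (q x : ℝ) (hq0 : 0 < q) (hq1 : q < 1)
    (hx : q ^ (-(1 / 2) : ℝ) ≤ x)
    (k : ℕ)
    (hkK : (k : ℤ) ≤ ⌊(1 : ℝ) / 2 - Real.log x / Real.log q⌋) :
    q ^ (k * (k - 1) / 2 : ℕ) * x ^ k * qPochR (Real.sqrt q) q k ≤ |qPochR x q k|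
    ∧ q ^ (k * (k - 1) / 2 : ℕ) * (∏' j : ℕ, (1 - Real.sqrt q * q ^ j)) * x ^ k
        ≤ |qPochR x q k| := by
  have hx0 : 0 < x := (Real.rpow_pos_of_pos hq0 _).trans_le hx
  have hfinite := pow_mul_pow_mul_qPochR_sqrt_le_abs_qPochR hq0 hq1 hx0 hkK
  have hinfinite : ∏' j : ℕ, (1 - √q * q ^ j) ≤ qPochR √q q k :=
    tprod_le_prod_range_of_le_one (multipliable_one_sub_mul_pow _ hq0.le hq1)
      (fun j => sub_nonneg.mpr (sqrt_mul_pow_le_one hq0.le hq1.le j))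
      (fun j => sub_le_self _ (by positivity)) k
  refine ⟨hfinite, le_trans ?_ hfinite⟩
  rw [mul_right_comm]
  gcongr

/-- For `q^{-1/2} ≤ x` and `1 ≤ k ≤ K(x) = ⌊1/2 − ln x / ln q⌋`:
`|(x;q)_k| ≥ q^{k(k-1)/2} xᵏ (q^{1/2};q)_k ≥ q^{k(k-1)/2} (q^{1/2};q)_∞ xᵏ`. -/
theorem stmt19 (q x : ℝ) (hq0 : 0 < q) (hq1 : q < 1)
    (hx : q ^ (-(1 / 2) : ℝ) ≤ x)
    (k : ℕ) (hk1 : 1 ≤ k)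
    (hkK : (k : ℤ) ≤ ⌊(1 : ℝ) / 2 - Real.log x / Real.log q⌋) :
    q ^ (k * (k - 1) / 2 : ℕ) * x ^ k * qPochR (Real.sqrt q) q k ≤ |qPochR x q k|
    ∧ q ^ (k * (k - 1) / 2 : ℕ) * (∏' j : ℕ, (1 - Real.sqrt q * q ^ j)) * x ^ k
        ≤ |qPochR x q k| :=
  stmt19_general q x hq0 hq1 hx k hkK
end
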